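/- For every non-divergent labelled transition system L = ⟨S, A, →⟩ and all states s, t ∈ S: s ≈b t if and only if s ≡lb t, i.e. branching bisimilarity coincides with the relation induced by the limited branching bisimulation game. -/

import Mathlib

namespace GamesBisim

/-- Parameter values `o` (ordinary) and `b` (branching) for generic bisimulations. -/
inductive XY | o | b
deriving DecidableEq

/-- The faces ☹ (frown) and ☺ (smile). -/
inductive Face | frown | smile
deriving DecidableEq

/-- Rewards: `*` (star) and `✓` (check). -/
inductive Rw | star | check
deriving DecidableEq

/-- A labelled transition system with states `S`, actions `A` containing a
distinguished silent action `tau`, and a transition relation. -/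
structure LTS (S : Type u) (A : Type v) where
  tau : A
  Trans : S → A → S → Prop

namespace LTS

variable {S : Type u} {A : Type v}

/-- A single silent (τ) step. -/
def TauStep (L : LTS S A) (s s' : S) : Prop := L.Trans s L.tau s'

/-- `↠`: the reflexive-transitive closure of the τ-step relation. -/
def TauStar (L : LTS S A) : S → S → Prop := Relation.ReflTransGen L.TauStep

/-- `↠⁺`: the transitive closure of the τ-step relation. -/
def TauPlus (L : LTS S A) : S → S → Prop := Relation.TransGen L.TauStep

/-- An LTS is non-divergent if it admits no infinite sequence of τ-steps. -/
def NonDivergent (L : LTS S A) : Prop :=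
  ¬ ∃ f : ℕ → S, ∀ i, L.TauStep (f i) (f (i + 1))

/-- A symmetric relation `R` is a branching bisimulation. -/
def IsBranchingBisim (L : LTS S A) (R : S → S → Prop) : Prop :=
  (∀ s t, R s t → R t s) ∧
  ∀ s t a s', R s t → L.Trans s a s' →
    (a = L.tau ∧ R s' t) ∨
    ∃ t1 t', L.TauStar t t1 ∧ L.Trans t1 a t' ∧ R s t1 ∧ R s' t'

/-- Branching bisimilarity `≈b`. -/
def BranchingBisimilar (L : LTS S A) (s t : S) : Prop :=
  ∃ R, L.IsBranchingBisim R ∧ R s t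

/-- A symmetric relation `R` is a delay bisimulation. -/
def IsDelayBisim (L : LTS S A) (R : S → S → Prop) : Prop :=
  (∀ s t, R s t → R t s) ∧
  ∀ s t a s', R s t → L.Trans s a s' →
    (a = L.tau ∧ R s' t) ∨
    ∃ t1 t', L.TauStar t t1 ∧ L.Trans t1 a t' ∧ R s' t'

/-- The generalised weak transition `s ↠_{x,R,t} s'`: a weak transition `s ↠ s'`,
which in case `x = b` additionally satisfies `t R s` and `t R s'`. -/
def GenTauStar (L : LTS S A) (x : XY) (R : S → S → Prop) (t : S) (s s' : S) : Prop :=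
  L.TauStar s s' ∧ (x = XY.b → R t s ∧ R t s')

/-- The strong generalised weak transition `s ⟹_{x,R,t} s'`: a weak transition
`s ↠ s'`, which in case `x = b` is witnessed by a finite τ-path all of whose states
are related to `t` by `R`. -/
def SGenTauStar (L : LTS S A) (x : XY) (R : S → S → Prop) (t : S) (s s' : S) : Prop :=
  L.TauStar s s' ∧
  (x = XY.b → R t s ∧ Relation.ReflTransGen (fun u u' => L.TauStep u u' ∧ R t u') s s')

/-- A symmetric relation `R` is an `(x,y)`-generic bisimulation. -/
def IsGenBisim (L : LTS S A) (x y : XY) (R : S → S → Prop) : Prop :=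
  (∀ s t, R s t → R t s) ∧
  ∀ s t a s', R s t → L.Trans s a s' →
    (a = L.tau ∧ R s' t) ∨
    ∃ t1 t2 t', L.GenTauStar x R s t t1 ∧ L.Trans t1 a t2 ∧
      L.GenTauStar y R s' t2 t' ∧ R s' t'

/-- `(x,y)`-generic bisimilarity `≈_{(x,y)}`. -/
def GenBisimilar (L : LTS S A) (x y : XY) (s t : S) : Prop :=
  ∃ R, L.IsGenBisim x y R ∧ R s t

/-- A symmetric relation `R` is an `(x,y)`-generic bisimulation with explicit
divergence (divergence condition D₄). -/
def IsGenBisimED (L : LTS S A) (x y : XY) (R : S → S → Prop) : Prop :=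
  L.IsGenBisim x y R ∧
  ∀ s t, R s t → ∀ f : ℕ → S, f 0 = s → (∀ i, L.TauStep (f i) (f (i + 1))) →
    ∃ t' k, L.TauPlus t t' ∧ R (f k) t'

/-- `(x,y)`-generic bisimilarity with explicit divergence `≈ed_{(x,y)}`. -/
def GenBisimilarED (L : LTS S A) (x y : XY) (s t : S) : Prop :=
  ∃ R, L.IsGenBisimED x y R ∧ R s t

end LTS

/-- A relation `R` has the stuttering property: whenever
`t₀ →τ t₁ →τ ⋯ →τ t_k` and `t₀ R t_k`, then `t_i R t_j` for all `0 ≤ i,j ≤ k`. -/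
def StutteringProperty {S : Type u} {A : Type v} (L : LTS S A) (R : S → S → Prop) : Prop :=
  ∀ (k : ℕ) (t : ℕ → S),
    (∀ i < k, L.TauStep (t i) (t (i + 1))) → R (t 0) (t k) →
    ∀ i j, i ≤ k → j ≤ k → R (t i) (t j)

/-! ## Two-player games

A play is a maximal (finite or infinite) sequence of configurations connected by
moves, represented as `π : ℕ → Option C` which is `none` from the point (if any)
where the play has ended; a play may only end in a configuration whose owner is
stuck. A strategy for a player is a (positional) function `σ : C → C` which is
required to pick a legal move at every configuration owned by that player admitting
at least one move; a play is consistent with `σ` if every move taken from a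
configuration owned by that player follows `σ`. -/

section Games

variable {C : Type u}

/-- `π` is a maximal play of the game with move relation `move`. -/
def IsPlay (move : C → C → Prop) (π : ℕ → Option C) : Prop :=
  (∀ i c d, π i = some c → π (i + 1) = some d → move c d) ∧
  (∀ i c, π i = some c → π (i + 1) = none → ∀ d, ¬ move c d) ∧
  (∀ i, π i = none → π (i + 1) = none)

/-- The play `π` is consistent with strategy `σ` of the player owning the
configurations satisfying `owned`. -/
def ConsistentWith (owned : C → Prop) (σ : C → C) (π : ℕ → Option C) : Prop :=
  ∀ i c d, π i = some c → owned c → π (i + 1) = some d → d = σ c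

/-- `σ` is a valid strategy for the player owning the configurations satisfying
`owned`: it picks a legal move wherever a move exists. -/
def ValidStrategy (owned : C → Prop) (move : C → C → Prop) (σ : C → C) : Prop :=
  ∀ c, owned c → (∃ d, move c d) → move c (σ c)

/-- The play `π` is finite and ends in the configuration `c`. -/
def EndsAt (π : ℕ → Option C) (c : C) : Prop := ∃ i, π i = some c ∧ π (i + 1) = none

/-- The play `π` is infinite. -/
def InfinitePlay (π : ℕ → Option C) : Prop := ∀ i, π i ≠ none

/-- The Büchi winning condition on infinite plays: the play passes through
infinitely many configurations carrying a `✓` reward. -/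
def BuchiWin (reward : C → Prop) (π : ℕ → Option C) : Prop :=
  ∀ n, ∃ i, n ≤ i ∧ ∃ c, π i = some c ∧ reward c

/-- Duplicator wins the play `π`: either the play is finite and Spoiler is stuck,
or the play is infinite and satisfies the winning condition `infWin`. -/
def DupWinsPlay (dupOwned : C → Prop) (infWin : (ℕ → Option C) → Prop)
    (π : ℕ → Option C) : Prop :=
  (∃ c, EndsAt π c ∧ ¬ dupOwned c) ∨ (InfinitePlay π ∧ infWin π)

/-- Spoiler wins the play `π` (all plays not won by Duplicator). -/
def SpWinsPlay (dupOwned : C → Prop) (infWin : (ℕ → Option C) → Prop)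
    (π : ℕ → Option C) : Prop :=
  (∃ c, EndsAt π c ∧ dupOwned c) ∨ (InfinitePlay π ∧ ¬ infWin π)

/-- Duplicator wins the configuration `c`: she has a strategy winning all plays
starting in `c`. -/
def DupWins (dupOwned : C → Prop) (move : C → C → Prop)
    (infWin : (ℕ → Option C) → Prop) (c : C) : Prop :=
  ∃ σ : C → C, ValidStrategy dupOwned move σ ∧
    ∀ π, IsPlay move π → π 0 = some c → ConsistentWith dupOwned σ π →
      DupWinsPlay dupOwned infWin π

/-- Spoiler wins the configuration `c`: he has a strategy winning all plays
starting in `c`. -/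
def SpWins (dupOwned : C → Prop) (move : C → C → Prop)
    (infWin : (ℕ → Option C) → Prop) (c : C) : Prop :=
  ∃ σ : C → C, ValidStrategy (fun d => ¬ dupOwned d) move σ ∧
    ∀ π, IsPlay move π → π 0 = some c → ConsistentWith (fun d => ¬ dupOwned d) σ π →
      SpWinsPlay dupOwned infWin π

end Games

/-! ## The limited branching bisimulation (lbb) game -/

/-- Configurations of the lbb game: Spoiler-owned `⟨(s,t)⟩` and Duplicator-owned
`⟨(s,t),(a,s')⟩`. -/
inductive LConf (S : Type u) (A : Type v)
  | sp (p : S × S)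
  | dup (p : S × S) (c : A × S)

/-- Ownership in the lbb game. -/
def LConf.dupOwned {S : Type u} {A : Type v} : LConf S A → Prop
  | .sp _ => False
  | .dup _ _ => True

/-- Moves of the lbb game. -/
inductive LMove {S : Type u} {A : Type v} (L : LTS S A) : LConf S A → LConf S A → Prop
  | sp1 {s t a s'} (h : L.Trans s a s') :
      LMove L (LConf.sp (s, t)) (LConf.dup (s, t) (a, s'))
  | sp2 {s t a t'} (h : L.Trans t a t') :
      LMove L (LConf.sp (s, t)) (LConf.dup (t, s) (a, t'))
  | dup1 {u v u'} :
      LMove L (LConf.dup (u, v) (L.tau, u')) (LConf.sp (u', v))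
  | dup2 {u v a u' v'} (h : L.Trans v a v') :
      LMove L (LConf.dup (u, v) (a, u')) (LConf.sp (u', v'))
  | dup3 {u v a u' v'} (h : L.TauStep v v') :
      LMove L (LConf.dup (u, v) (a, u')) (LConf.sp (u, v'))

/-- `s ≡lb t`: Duplicator wins the lbb game from `⟨(s,t)⟩_S`; finite plays are won
by Duplicator iff Spoiler is stuck, and all infinite plays are won by Duplicator. -/
def LTS.lbbEquiv {S : Type u} {A : Type v} (L : LTS S A) (s t : S) : Prop :=
  DupWins LConf.dupOwned (LMove L) (fun _ => True) (LConf.sp (s, t))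

/-! ## The branching bisimulation (bb) game -/

/-- Configurations of the bb game: `⟨(s,t),c,r⟩` owned by Spoiler or Duplicator,
with challenge `c ∈ (A × S) ∪ {†}` (where `none` is `†`) and reward `r`. -/
inductive BConf (S : Type u) (A : Type v)
  | sp (p : S × S) (c : Option (A × S)) (r : Rw)
  | dup (p : S × S) (c : Option (A × S)) (r : Rw)

/-- Ownership in the bb game. -/
def BConf.dupOwned {S : Type u} {A : Type v} : BConf S A → Prop
  | .sp _ _ _ => False
  | .dup _ _ _ => True

/-- The configuration carries a `✓` reward. -/
def BConf.reward {S : Type u} {A : Type v} : BConf S A → Prop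
  | .sp _ _ r => r = Rw.check
  | .dup _ _ r => r = Rw.check

/-- Moves of the bb game. -/
inductive BMove {S : Type u} {A : Type v} (L : LTS S A) : BConf S A → BConf S A → Prop
  | sp1star {s t c r a s'} (h : L.Trans s a s') (hc : c = some (a, s') ∨ c = none) :
      BMove L (BConf.sp (s, t) c r) (BConf.dup (s, t) (some (a, s')) Rw.star)
  | sp1check {s t c r a s'} (h : L.Trans s a s')
      (hc : ¬(c = some (a, s') ∨ c = none)) :
      BMove L (BConf.sp (s, t) c r) (BConf.dup (s, t) (some (a, s')) Rw.check)
  | sp2 {s t c r a t'} (h : L.Trans t a t') :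
      BMove L (BConf.sp (s, t) c r) (BConf.dup (t, s) (some (a, t')) Rw.check)
  | dup1 {u v u' r} :
      BMove L (BConf.dup (u, v) (some (L.tau, u')) r) (BConf.sp (u', v) none Rw.check)
  | dup2 {u v a u' v' r} (h : L.Trans v a v') :
      BMove L (BConf.dup (u, v) (some (a, u')) r) (BConf.sp (u', v') none Rw.check)
  | dup3 {u v a u' v' r} (h : L.TauStep v v') :
      BMove L (BConf.dup (u, v) (some (a, u')) r)
        (BConf.sp (u, v') (some (a, u')) Rw.star)

/-- `s ≡b t`: Duplicator wins the bb game from `⟨(s,t),†,*⟩_S`, where infinite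
plays are won by Duplicator iff they yield infinitely many `✓` rewards. -/
def LTS.bbEquiv {S : Type u} {A : Type v} (L : LTS S A) (s t : S) : Prop :=
  DupWins BConf.dupOwned (BMove L) (BuchiWin BConf.reward) (BConf.sp (s, t) none Rw.star)

/-! ## The generic bisimulation (gb) game, and its explicit-divergence variant -/

/-- Configurations of the generic games: `⟨(s,t),c,m,r⟩` owned by Spoiler or
Duplicator, with challenge `c ∈ (A × S) ∪ {†}`, partial match
`m ∈ (S × {☹,☺}) ∪ {†}` and reward `r`. -/
inductive GConf (S : Type u) (A : Type v)
  | sp (p : S × S) (c : Option (A × S)) (m : Option (S × Face)) (r : Rw)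
  | dup (p : S × S) (c : Option (A × S)) (m : Option (S × Face)) (r : Rw)

/-- Ownership in the generic games. -/
def GConf.dupOwned {S : Type u} {A : Type v} : GConf S A → Prop
  | .sp _ _ _ _ => False
  | .dup _ _ _ _ => True

/-- The configuration carries a `✓` reward. -/
def GConf.reward {S : Type u} {A : Type v} : GConf S A → Prop
  | .sp _ _ _ r => r = Rw.check
  | .dup _ _ _ r => r = Rw.check

/-- Moves of the `E`-generic bisimulation game. The parameter `rw1` is the reward
handed out by Duplicator's rule (1): `✓` in the gb game, `*` in the gbed game. -/
inductive GMove {S : Type u} {A : Type v} (L : LTS S A) (E : Set Face) (rw1 : Rw) :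
    GConf S A → GConf S A → Prop
  | sp1 {s t c m r} (hc : c ≠ none) :
      GMove L E rw1 (GConf.sp (s, t) c m r) (GConf.dup (s, t) c m Rw.star)
  | sp2a {s t m r a s'} (h : L.Trans s a s') :
      GMove L E rw1 (GConf.sp (s, t) none m r)
        (GConf.dup (s, t) (some (a, s')) (some (t, Face.frown)) Rw.star)
  | sp2b {s t c m r a s'} (h : L.Trans s a s') (hc : c ≠ some (a, s')) :
      GMove L E rw1 (GConf.sp (s, t) c m r)
        (GConf.dup (s, t) (some (a, s')) (some (t, Face.frown)) Rw.check)
  | sp3 {s t c m r a t'} (h : L.Trans t a t') :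
      GMove L E rw1 (GConf.sp (s, t) c m r)
        (GConf.dup (t, s) (some (a, t')) (some (s, Face.frown)) Rw.check)
  | dup1 {u v u' vb f r} :
      GMove L E rw1 (GConf.dup (u, v) (some (L.tau, u')) (some (vb, f)) r)
        (GConf.sp (u', vb) none none rw1)
  | dup2a {u v a u' vb v' r} (h : L.Trans vb a v') :
      GMove L E rw1 (GConf.dup (u, v) (some (a, u')) (some (vb, Face.frown)) r)
        (GConf.sp (u', v') (some (a, u')) (some (v', Face.smile)) Rw.star)
  | dup2b {u v a u' vb v' r} (h : L.Trans vb a v') :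
      GMove L E rw1 (GConf.dup (u, v) (some (a, u')) (some (vb, Face.frown)) r)
        (GConf.sp (u', v') none none Rw.check)
  | dup2c {u v a u' vb v' r} (h : L.Trans vb a v') (hE : Face.smile ∈ E) :
      GMove L E rw1 (GConf.dup (u, v) (some (a, u')) (some (vb, Face.frown)) r)
        (GConf.sp (u, v) (some (a, u')) (some (v', Face.smile)) Rw.star)
  | dup3a {u v a u' vb f v' r} (h : L.TauStep vb v') :
      GMove L E rw1 (GConf.dup (u, v) (some (a, u')) (some (vb, f)) r)
        (GConf.sp (u, v') (some (a, u')) (some (v', f)) Rw.star)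
  | dup3b {u v a u' vb v' r} (h : L.TauStep vb v') :
      GMove L E rw1 (GConf.dup (u, v) (some (a, u')) (some (vb, Face.smile)) r)
        (GConf.sp (u', v') none none Rw.check)
  | dup3c {u v a u' vb f v' r} (h : L.TauStep vb v') (hE : f ∈ E) :
      GMove L E rw1 (GConf.dup (u, v) (some (a, u')) (some (vb, f)) r)
        (GConf.sp (u, v) (some (a, u')) (some (v', f)) Rw.star)

/-- `E(x,y) ⊆ {☹,☺}`: the smallest set containing `☹` when `x = o` and `☺` when
`y = o`. -/
def Exy (x y : XY) : Set Face :=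
  {f | (f = Face.frown ∧ x = XY.o) ∨ (f = Face.smile ∧ y = XY.o)}

/-- `s ≡_E t`: Duplicator wins the `E`-generic bisimulation game from
`⟨(s,t),†,†,*⟩_S`; infinite plays are won by Duplicator iff they yield infinitely
many `✓` rewards. -/
def LTS.gbEquiv {S : Type u} {A : Type v} (L : LTS S A) (E : Set Face) (s t : S) : Prop :=
  DupWins GConf.dupOwned (GMove L E Rw.check) (BuchiWin GConf.reward)
    (GConf.sp (s, t) none none Rw.star)

/-- `s ≡ed_E t`: Duplicator wins the `E`-generic bisimulation with explicit
divergence game from `⟨(s,t),†,†,*⟩_S`. -/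
def LTS.gbedEquiv {S : Type u} {A : Type v} (L : LTS S A) (E : Set Face) (s t : S) : Prop :=
  DupWins GConf.dupOwned (GMove L E Rw.star) (BuchiWin GConf.reward)
    (GConf.sp (s, t) none none Rw.star)

/-- The abstraction function `f(⟨(s,t),c,m,r⟩) = ⟨(s,t),c,r⟩` from configurations
of the generic game to configurations of the bb game, preserving ownership. -/
def fabs {S : Type u} {A : Type v} : GConf S A → BConf S A
  | .sp p c _ r => .sp p c r
  | .dup p c _ r => .dup p c r



/-! ### Auxiliary development: semi-branching bisimulations -/

section AuxSBB

variable {S : Type u} {A : Type v}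

/-- Semi-branching bisimulation. -/
def IsSBB (L : LTS S A) (R : S → S → Prop) : Prop :=
  (∀ s t, R s t → R t s) ∧
  ∀ s t a s', R s t → L.Trans s a s' →
    (a = L.tau ∧ ∃ t1, L.TauStar t t1 ∧ R s t1 ∧ R s' t1) ∨
    (∃ t1 t', L.TauStar t t1 ∧ L.Trans t1 a t' ∧ R s t1 ∧ R s' t')

/-- Semi-branching bisimilarity. -/
def SB (L : LTS S A) (s t : S) : Prop := ∃ R, IsSBB L R ∧ R s t

lemma isSBB_of_branching {L : LTS S A} {R : S → S → Prop}
    (hR : L.IsBranchingBisim R) : IsSBB L R := by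
  refine ⟨hR.1, fun s t a s' hst htr => ?_⟩
  rcases hR.2 s t a s' hst htr with ⟨ha, h⟩ | ⟨t1, t', h1, h2, h3, h4⟩
  · exact Or.inl ⟨ha, t, Relation.ReflTransGen.refl, hst, h⟩
  · exact Or.inr ⟨t1, t', h1, h2, h3, h4⟩

lemma isSBB_SB (L : LTS S A) : IsSBB L (SB L) := by
  constructor
  · rintro s t ⟨R, hR, h⟩; exact ⟨R, hR, hR.1 _ _ h⟩
  · rintro s t a s' ⟨R, hR, h⟩ htr
    rcases hR.2 s t a s' h htr with ⟨ha, t1, h1, h2, h3⟩ | ⟨t1, t', h1, h2, h3, h4⟩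
    · exact Or.inl ⟨ha, t1, h1, ⟨R, hR, h2⟩, ⟨R, hR, h3⟩⟩
    · exact Or.inr ⟨t1, t', h1, h2, ⟨R, hR, h3⟩, ⟨R, hR, h4⟩⟩

lemma SB_symm {L : LTS S A} {s t : S} (h : SB L s t) : SB L t s :=
  (isSBB_SB L).1 s t h

lemma SB_refl (L : LTS S A) (s : S) : SB L s s := by
  refine ⟨Eq, ⟨fun a b h => h.symm, ?_⟩, rfl⟩
  rintro p q a p' rfl htr
  exact Or.inr ⟨p, p', Relation.ReflTransGen.refl, htr, rfl, rfl⟩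

/-- Mimicking lemma: a weak move can be matched. -/
lemma SB_mimic {L : LTS S A} {t r t1 : S} (h : SB L t r) (hts : L.TauStar t t1) :
    ∃ r1, L.TauStar r r1 ∧ SB L t1 r1 := by
  induction hts with
  | refl => exact ⟨r, Relation.ReflTransGen.refl, h⟩
  | tail _ hstep ih =>
    obtain ⟨r1, hr1, hSB⟩ := ih
    rcases (isSBB_SB L).2 _ _ _ _ hSB hstep with ⟨_, r2, h2, _, h4⟩ |
        ⟨r2, r', h2, h3, _, h5⟩
    · exact ⟨r2, hr1.trans h2, h4⟩
    · exact ⟨r', hr1.trans (h2.trans (Relation.ReflTransGen.single h3)), h5⟩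

lemma SB_trans {L : LTS S A} {s t r : S} (h1 : SB L s t) (h2 : SB L t r) :
    SB L s r := by
  refine ⟨fun p q => ∃ m, SB L p m ∧ SB L m q, ⟨?_, ?_⟩, t, h1, h2⟩
  · rintro p q ⟨m, hm1, hm2⟩; exact ⟨m, SB_symm hm2, SB_symm hm1⟩
  · rintro p q a p' ⟨m, hm1, hm2⟩ htr
    rcases (isSBB_SB L).2 _ _ _ _ hm1 htr with ⟨ha, m1, hms, hpm1, hp'm1⟩ |
        ⟨m1, m', hms, htr1, hpm1, hp'm'⟩
    · obtain ⟨q1, hq1, hmq1⟩ := SB_mimic hm2 hms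
      exact Or.inl ⟨ha, q1, hq1, ⟨m1, hpm1, hmq1⟩, ⟨m1, hp'm1, hmq1⟩⟩
    · obtain ⟨q1, hq1, hm1q1⟩ := SB_mimic hm2 hms
      rcases (isSBB_SB L).2 _ _ _ _ hm1q1 htr1 with ⟨ha, q2, hq2, hA, hB⟩ |
          ⟨q2, q', hq2, htr2, hA, hB⟩
      · exact Or.inl ⟨ha, q2, hq1.trans hq2, ⟨m1, hpm1, hA⟩, ⟨m', hp'm', hB⟩⟩
      · exact Or.inr ⟨q2, q', hq1.trans hq2, htr2, ⟨m1, hpm1, hA⟩, ⟨m', hp'm', hB⟩⟩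

/-- Stuttering lemma for semi-branching bisimilarity. -/
lemma SB_stutter {L : LTS S A} {v v2 vh : S} (h : SB L v vh)
    (h1 : L.TauStep v v2) (h2 : L.TauStar v2 vh) : SB L v v2 := by
  classical
  refine ⟨fun p q => SB L p q ∨
      ((L.TauStar v p ∧ L.TauStar p vh) ∧ (L.TauStar v q ∧ L.TauStar q vh)),
    ⟨?_, ?_⟩, Or.inr ⟨⟨Relation.ReflTransGen.refl,
      (Relation.ReflTransGen.single h1).trans h2⟩,
      ⟨Relation.ReflTransGen.single h1, h2⟩⟩⟩
  · rintro p q (hpq | ⟨ha, hb⟩)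
    · exact Or.inl (SB_symm hpq)
    · exact Or.inr ⟨hb, ha⟩
  · rintro p q a p' (hpq | ⟨⟨hvp, hpvh⟩, ⟨hvq, hqvh⟩⟩) htr
    · rcases (isSBB_SB L).2 _ _ _ _ hpq htr with ⟨ha, q1, hA, hB, hC⟩ |
          ⟨q1, q', hA, hB, hC, hD⟩
      · exact Or.inl ⟨ha, q1, hA, Or.inl hB, Or.inl hC⟩
      · exact Or.inr ⟨q1, q', hA, hB, Or.inl hC, Or.inl hD⟩
    · obtain ⟨w, hvhw, hpw⟩ := SB_mimic h hvp
      rcases (isSBB_SB L).2 _ _ _ _ hpw htr with ⟨ha, w1, hA, hB, hC⟩ |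
          ⟨w1, w', hA, hB, hC, hD⟩
      · exact Or.inl ⟨ha, w1, (hqvh.trans hvhw).trans hA, Or.inl hB, Or.inl hC⟩
      · exact Or.inr ⟨w1, w', (hqvh.trans hvhw).trans hA, hB, Or.inl hC, Or.inl hD⟩

/-- Key one-step transfer property for semi-branching bisimilarity. -/
lemma SB_star {L : LTS S A} {u v : S} {a : A} {u' : S}
    (h : SB L u v) (htr : L.Trans u a u') :
    (a = L.tau ∧ SB L u' v) ∨ (∃ v', L.Trans v a v' ∧ SB L u' v') ∨
    (∃ v2, L.TauStep v v2 ∧ SB L u v2) := by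
  rcases (isSBB_SB L).2 _ _ _ _ h htr with ⟨ha, vh, hvv, huvh, hu'vh⟩ |
      ⟨v1, v', hvv, htr1, huv1, hu'v'⟩
  · rcases hvv.cases_head with rfl | ⟨v2, hstep, htail⟩
    · exact Or.inl ⟨ha, hu'vh⟩
    · have hvvh : SB L v vh := SB_trans (SB_symm h) huvh
      have h2 := SB_stutter hvvh hstep htail
      exact Or.inr (Or.inr ⟨v2, hstep, SB_trans h h2⟩)
  · rcases hvv.cases_head with rfl | ⟨v2, hstep, htail⟩
    · exact Or.inr (Or.inl ⟨v', htr1, hu'v'⟩)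
    · have hvv1 : SB L v v1 := SB_trans (SB_symm h) huv1
      have h2 := SB_stutter hvv1 hstep htail
      exact Or.inr (Or.inr ⟨v2, hstep, SB_trans h h2⟩)

end AuxSBB

/-! ### Auxiliary development: game lemmas -/

section AuxGame

variable {S : Type u} {A : Type v}

/-- Prepend a configuration to a play. -/
def prepend {C : Type w} (c : C) (π : ℕ → Option C) : ℕ → Option C
  | 0 => some c
  | (j + 1) => π j

@[simp] lemma prepend_zero {C : Type w} (c : C) (π : ℕ → Option C) :
    prepend c π 0 = some c := rfl

@[simp] lemma prepend_succ {C : Type w} (c : C) (π : ℕ → Option C) (j : ℕ) :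
    prepend c π (j + 1) = π j := rfl

lemma lmove_sp_inv {L : LTS S A} {u v : S} {d : LConf S A}
    (h : LMove L (LConf.sp (u, v)) d) :
    (∃ a u', L.Trans u a u' ∧ d = LConf.dup (u, v) (a, u')) ∨
    (∃ a v', L.Trans v a v' ∧ d = LConf.dup (v, u) (a, v')) := by
  cases h with
  | sp1 h => exact Or.inl ⟨_, _, h, rfl⟩
  | sp2 h => exact Or.inr ⟨_, _, h, rfl⟩

lemma lmove_dup_inv {L : LTS S A} {u v : S} {a : A} {u' : S} {d : LConf S A}
    (h : LMove L (LConf.dup (u, v) (a, u')) d) :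
    (a = L.tau ∧ d = LConf.sp (u', v)) ∨
    (∃ v', L.Trans v a v' ∧ d = LConf.sp (u', v')) ∨
    (∃ v', L.TauStep v v' ∧ d = LConf.sp (u, v')) := by
  cases h with
  | dup1 => exact Or.inl ⟨rfl, rfl⟩
  | dup2 h => exact Or.inr (Or.inl ⟨_, h, rfl⟩)
  | dup3 h => exact Or.inr (Or.inr ⟨_, h, rfl⟩)

/-- The invariant maintained by Duplicator in the lbb game. -/
def LInv (L : LTS S A) : LConf S A → Prop
  | .sp p => SB L p.1 p.2
  | .dup p c => SB L p.1 p.2 ∧ L.Trans p.1 c.1 c.2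

lemma LInv_dup_move (L : LTS S A) (u v : S) (a : A) (u' : S)
    (hsb : SB L u v) (htr : L.Trans u a u') :
    ∃ d, LMove L (LConf.dup (u, v) (a, u')) d ∧ LInv L d := by
  rcases SB_star hsb htr with ⟨ha, h⟩ | ⟨v', htr', h⟩ | ⟨v2, hstep, h⟩
  · subst ha; exact ⟨LConf.sp (u', v), LMove.dup1, h⟩
  · exact ⟨LConf.sp (u', v'), LMove.dup2 htr', h⟩
  · exact ⟨LConf.sp (u, v2), LMove.dup3 hstep, h⟩

lemma LInv_sp_step {L : LTS S A} {p : S × S} {d : LConf S A}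
    (h : LInv L (LConf.sp p)) (hm : LMove L (LConf.sp p) d) : LInv L d := by
  obtain ⟨u, v⟩ := p
  rcases lmove_sp_inv hm with ⟨a, u', htr, rfl⟩ | ⟨a, v', htr, rfl⟩
  · exact ⟨h, htr⟩
  · exact ⟨SB_symm h, htr⟩

open Classical in
/-- Duplicator's strategy in the lbb game. -/
noncomputable def lstrat (L : LTS S A) : LConf S A → LConf S A := fun c =>
  if h : ∃ d, LMove L c d ∧ LInv L d then h.choose
  else if h2 : ∃ d, LMove L c d then h2.choose else c

lemma lstrat_valid (L : LTS S A) :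
    ValidStrategy LConf.dupOwned (LMove L) (lstrat L) := by
  intro c _ hex
  by_cases h1 : ∃ d, LMove L c d ∧ LInv L d
  · simp only [lstrat, dif_pos h1]
    exact h1.choose_spec.1
  · simp only [lstrat, dif_neg h1, dif_pos hex]
    exact hex.choose_spec

lemma lstrat_inv (L : LTS S A) {p : S × S} {q : A × S}
    (hinv : LInv L (LConf.dup p q)) :
    LMove L (LConf.dup p q) (lstrat L (LConf.dup p q)) ∧
      LInv L (lstrat L (LConf.dup p q)) := by
  obtain ⟨u, v⟩ := p; obtain ⟨a, u'⟩ := q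
  obtain ⟨hsb, htr⟩ := hinv
  have hex := LInv_dup_move L u v a u' hsb htr
  simp only [lstrat, dif_pos hex]
  exact hex.choose_spec

/-- Soundness: semi-branching bisimilarity implies winning the lbb game. -/
lemma sb_lbb (L : LTS S A) {s t : S} (hsb : SB L s t) : L.lbbEquiv s t := by
  classical
  refine ⟨lstrat L, lstrat_valid L, ?_⟩
  intro π hplay h0 hcons
  have inv : ∀ i c, π i = some c → LInv L c := by
    intro i
    induction i with
    | zero =>
      intro c hc
      rw [h0] at hc
      cases hc
      exact hsb
    | succ j ih =>
      intro c hc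
      obtain ⟨e, he⟩ : ∃ e, π j = some e := by
        cases he : π j with
        | none => rw [hplay.2.2 j he] at hc; cases hc
        | some e => exact ⟨e, rfl⟩
      have hmv := hplay.1 j e c he hc
      cases e with
      | sp p => exact LInv_sp_step (ih _ he) hmv
      | dup p q =>
        have hc' : c = lstrat L (LConf.dup p q) := hcons j _ c he trivial hc
        rw [hc']
        exact (lstrat_inv L (ih _ he)).2
  by_cases hinf : ∀ i, π i ≠ none
  · exact Or.inr ⟨hinf, trivial⟩
  · push_neg at hinf
    have hj : π (Nat.find hinf) = none := Nat.find_spec hinf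
    have hj0 : Nat.find hinf ≠ 0 := by
      intro h; rw [h, h0] at hj; cases hj
    obtain ⟨k, hk⟩ := Nat.exists_eq_succ_of_ne_zero hj0
    have hkn : π k ≠ none := Nat.find_min hinf (by rw [hk]; exact Nat.lt_succ_self k)
    obtain ⟨c, hc⟩ : ∃ c, π k = some c := by
      cases he : π k with
      | none => exact absurd he hkn
      | some e => exact ⟨e, rfl⟩
    have hnone : π (k + 1) = none := by rw [hk] at hj; exact hj
    have hstuck := hplay.2.1 k c hc hnone
    cases c with
    | sp p => exact Or.inl ⟨LConf.sp p, ⟨k, hc, hnone⟩, fun h => h⟩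
    | dup p q =>
      exact absurd (lstrat_inv L (inv k _ hc)).1 (hstuck _)

/-- Winning all plays from a configuration with a fixed strategy. -/
def WinsFrom (L : LTS S A) (σ : LConf S A → LConf S A) (c : LConf S A) : Prop :=
  ∀ π, IsPlay (LMove L) π → π 0 = some c →
    ConsistentWith LConf.dupOwned σ π →
    DupWinsPlay LConf.dupOwned (fun _ => True) π

lemma winsFrom_step (L : LTS S A) (σ : LConf S A → LConf S A) {c d : LConf S A}
    (hw : WinsFrom L σ c) (hmv : LMove L c d)
    (hok : ¬ LConf.dupOwned c ∨ d = σ c) : WinsFrom L σ d := by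
  intro π hplay h0 hcons
  have hplay' : IsPlay (LMove L) (prepend c π) := by
    refine ⟨?_, ?_, ?_⟩
    · intro i
      cases i with
      | zero =>
        intro x y hx hy
        simp only [prepend_zero, prepend_succ, Option.some.injEq] at hx hy
        rw [h0] at hy
        cases hy; cases hx
        exact hmv
      | succ j =>
        intro x y hx hy
        simp only [prepend_succ] at hx hy
        exact hplay.1 j x y hx hy
    · intro i
      cases i with
      | zero =>
        intro x hx hn
        simp only [prepend_succ, h0] at hn
        exact (Option.some_ne_none _ hn).elim
      | succ j =>
        intro x hx hn
        simp only [prepend_succ] at hx hn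
        exact hplay.2.1 j x hx hn
    · intro i
      cases i with
      | zero =>
        intro hn
        simp only [prepend_zero] at hn
        exact (Option.some_ne_none _ hn).elim
      | succ j =>
        intro hn
        simp only [prepend_succ] at hn ⊢
        exact hplay.2.2 j hn
  have hcons' : ConsistentWith LConf.dupOwned σ (prepend c π) := by
    intro i
    cases i with
    | zero =>
      intro x y hx ho hy
      simp only [prepend_zero, Option.some.injEq] at hx
      cases hx
      rcases hok with h | h
      · exact absurd ho h
      · simp only [prepend_succ, h0, Option.some.injEq] at hy
        cases hy; exact h
    | succ j =>
      intro x y hx ho hy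
      simp only [prepend_succ] at hx hy
      exact hcons j x y hx ho hy
  rcases hw (prepend c π) hplay' rfl hcons' with ⟨e, ⟨i, hi, hi1⟩, hnd⟩ | ⟨hinf, _⟩
  · cases i with
    | zero =>
      simp only [prepend_succ, h0] at hi1
      exact (Option.some_ne_none _ hi1).elim
    | succ j =>
      simp only [prepend_succ] at hi hi1
      exact Or.inl ⟨e, ⟨j, hi, hi1⟩, hnd⟩
  · exact Or.inr ⟨fun i => hinf (i + 1), trivial⟩

lemma winsFrom_notstuck (L : LTS S A) (σ : LConf S A → LConf S A) {c : LConf S A}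
    (hw : WinsFrom L σ c) (hd : LConf.dupOwned c) : ∃ d, LMove L c d := by
  by_contra h
  push_neg at h
  have hplay : IsPlay (LMove L) (prepend c fun _ => none) := by
    refine ⟨?_, ?_, ?_⟩
    · intro i
      cases i with
      | zero => intro x y _ hy; exact (Option.some_ne_none _ hy.symm).elim
      | succ j => intro x y hx _; exact (Option.some_ne_none _ hx.symm).elim
    · intro i
      cases i with
      | zero =>
        intro x hx _
        simp only [prepend_zero, Option.some.injEq] at hx
        cases hx; exact h
      | succ j => intro x hx _; exact (Option.some_ne_none _ hx.symm).elim
    · intro i _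
      simp only [prepend_succ]
  have hcons : ConsistentWith LConf.dupOwned σ (prepend c fun _ => none) := by
    intro i x y hx ho hy
    cases i with
    | zero => exact (Option.some_ne_none _ hy.symm).elim
    | succ j => exact (Option.some_ne_none _ hx.symm).elim
  rcases hw _ hplay rfl hcons with ⟨e, ⟨i, hi, _⟩, hnd⟩ | ⟨hinf, _⟩
  · cases i with
    | zero =>
      simp only [prepend_zero, Option.some.injEq] at hi
      cases hi; exact hnd hd
    | succ j => exact (Option.some_ne_none _ hi.symm).elim
  · exact absurd (rfl : (prepend c fun _ => none) 1 = none) (hinf 1)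

/-- Non-divergence yields well-foundedness of the reversed τ-step relation. -/
lemma wf_tau (L : LTS S A) (hnd : L.NonDivergent) :
    WellFounded (fun y x => L.TauStep x y) := by
  classical
  constructor
  intro x
  by_contra hx
  have key : ∀ z : S, ¬ Acc (fun y x => L.TauStep x y) z →
      ∃ w, L.TauStep z w ∧ ¬ Acc (fun y x => L.TauStep x y) w := by
    intro z hz
    by_contra hcon
    push_neg at hcon
    exact hz (Acc.intro z fun y hy => hcon y hy)
  let g : {z : S // ¬ Acc (fun y x => L.TauStep x y) z} →
      {z : S // ¬ Acc (fun y x => L.TauStep x y) z} :=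
    fun z => ⟨(key z.1 z.2).choose, (key z.1 z.2).choose_spec.2⟩
  let f : ℕ → {z : S // ¬ Acc (fun y x => L.TauStep x y) z} :=
    fun n => g^[n] ⟨x, hx⟩
  refine hnd ⟨fun n => (f n).1, fun n => ?_⟩
  have hsucc : f (n + 1) = g (f n) := Function.iterate_succ_apply' g n _
  show L.TauStep (f n).1 (f (n + 1)).1
  rw [hsucc]
  exact (key (f n).1 (f n).2).choose_spec.1

/-- Extraction: responses to a challenge from a winning strategy. -/
lemma extract (L : LTS S A) (hnd : L.NonDivergent) (σ : LConf S A → LConf S A)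
    (hval : ValidStrategy LConf.dupOwned (LMove L) σ)
    {s : S} {a : A} {s' : S} (hs : L.Trans s a s') (t : S) :
    ∀ v, WinsFrom L σ (LConf.sp (s, v)) →
      (v = t ∨ ∃ v0, L.TauStar t v0 ∧ L.TauStep v0 v ∧ WinsFrom L σ (LConf.sp (s, v0))) →
      (a = L.tau ∧ L.lbbEquiv s' t) ∨
      ∃ t1 t', L.TauStar t t1 ∧ L.Trans t1 a t' ∧ L.lbbEquiv s t1 ∧ L.lbbEquiv s' t' := by
  intro v
  refine (wf_tau L hnd).induction
    (C := fun v => WinsFrom L σ (LConf.sp (s, v)) →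
      (v = t ∨ ∃ v0, L.TauStar t v0 ∧ L.TauStep v0 v ∧ WinsFrom L σ (LConf.sp (s, v0))) →
      (a = L.tau ∧ L.lbbEquiv s' t) ∨
      ∃ t1 t', L.TauStar t t1 ∧ L.Trans t1 a t' ∧ L.lbbEquiv s t1 ∧ L.lbbEquiv s' t')
    v ?_
  intro v ih hw hchain
  have htv : L.TauStar t v := by
    rcases hchain with rfl | ⟨v0, hts, hstep, _⟩
    · exact Relation.ReflTransGen.refl
    · exact hts.tail hstep
  have hmv : LMove L (LConf.sp (s, v)) (LConf.dup (s, v) (a, s')) := LMove.sp1 hs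
  have hw1 : WinsFrom L σ (LConf.dup (s, v) (a, s')) :=
    winsFrom_step L σ hw hmv (Or.inl fun h => h)
  have hex := winsFrom_notstuck L σ hw1 trivial
  have hmv2 : LMove L (LConf.dup (s, v) (a, s')) (σ (LConf.dup (s, v) (a, s'))) :=
    hval _ trivial hex
  have hw2 : WinsFrom L σ (σ (LConf.dup (s, v) (a, s'))) :=
    winsFrom_step L σ hw1 hmv2 (Or.inr rfl)
  rcases lmove_dup_inv hmv2 with ⟨ha, hde⟩ | ⟨v', htr, hde⟩ | ⟨v2, hstep, hde⟩
  · rw [hde] at hw2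
    rcases hchain with rfl | ⟨v0, hts, hstep, hw0⟩
    · exact Or.inl ⟨ha, σ, hval, hw2⟩
    · refine Or.inr ⟨v0, v, hts, ?_, ⟨σ, hval, hw0⟩, ⟨σ, hval, hw2⟩⟩
      rw [ha]; exact hstep
  · rw [hde] at hw2
    exact Or.inr ⟨v, v', htv, htr, ⟨σ, hval, hw⟩, ⟨σ, hval, hw2⟩⟩
  · rw [hde] at hw2
    exact ih v2 hstep hw2 (Or.inr ⟨v, htv, hstep, hw⟩)

/-- Replace the head of a play. -/
def rehead {C : Type w} (c : C) (π : ℕ → Option C) : ℕ → Option C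
  | 0 => some c
  | (j + 1) => π (j + 1)

@[simp] lemma rehead_zero {C : Type w} (c : C) (π : ℕ → Option C) :
    rehead c π 0 = some c := rfl

@[simp] lemma rehead_succ {C : Type w} (c : C) (π : ℕ → Option C) (j : ℕ) :
    rehead c π (j + 1) = π (j + 1) := rfl

/-- Symmetry of the lbb game equivalence. -/
lemma lbb_symm (L : LTS S A) {s t : S} (h : L.lbbEquiv s t) : L.lbbEquiv t s := by
  obtain ⟨σ, hval, hw⟩ := h
  refine ⟨σ, hval, ?_⟩
  intro π hplay h0 hcons
  have corr : ∀ (u v : S) (d : LConf S A), LMove L (LConf.sp (u, v)) d →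
      LMove L (LConf.sp (v, u)) d := by
    intro u v d hd
    rcases lmove_sp_inv hd with ⟨a, u', h1, rfl⟩ | ⟨a, v', h1, rfl⟩
    · exact LMove.sp2 h1
    · exact LMove.sp1 h1
  have hplay' : IsPlay (LMove L) (rehead (LConf.sp (s, t)) π) := by
    refine ⟨?_, ?_, ?_⟩
    · intro i
      cases i with
      | zero =>
        intro x y hx hy
        simp only [rehead_zero, Option.some.injEq] at hx
        simp only [rehead_succ] at hy
        cases hx
        exact corr t s y (hplay.1 0 _ y h0 hy)
      | succ j =>
        intro x y hx hy
        simp only [rehead_succ] at hx hy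
        exact hplay.1 (j + 1) x y hx hy
    · intro i
      cases i with
      | zero =>
        intro x hx hn
        simp only [rehead_zero, Option.some.injEq] at hx
        simp only [rehead_succ] at hn
        cases hx
        intro d hd
        exact hplay.2.1 0 _ h0 hn d (corr s t d hd)
      | succ j =>
        intro x hx hn
        simp only [rehead_succ] at hx hn
        exact hplay.2.1 (j + 1) x hx hn
    · intro i
      cases i with
      | zero =>
        intro hn
        simp only [rehead_zero] at hn
        exact (Option.some_ne_none _ hn).elim
      | succ j =>
        intro hn
        simp only [rehead_succ] at hn ⊢
        exact hplay.2.2 (j + 1) hn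
  have hcons' : ConsistentWith LConf.dupOwned σ (rehead (LConf.sp (s, t)) π) := by
    intro i
    cases i with
    | zero =>
      intro x y hx ho _
      simp only [rehead_zero, Option.some.injEq] at hx
      cases hx
      exact absurd ho (fun h => h)
    | succ j =>
      intro x y hx ho hy
      simp only [rehead_succ] at hx hy
      exact hcons (j + 1) x y hx ho hy
  rcases hw _ hplay' rfl hcons' with ⟨e, ⟨i, hi, hi1⟩, hnd⟩ | ⟨hinf, _⟩
  · cases i with
    | zero =>
      simp only [rehead_zero, Option.some.injEq] at hi
      simp only [rehead_succ] at hi1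
      exact Or.inl ⟨LConf.sp (t, s), ⟨0, h0, hi1⟩, fun h => h⟩
    | succ j =>
      simp only [rehead_succ] at hi hi1
      exact Or.inl ⟨e, ⟨j + 1, hi, hi1⟩, hnd⟩
  · refine Or.inr ⟨fun i => ?_, trivial⟩
    cases i with
    | zero => intro h; rw [h0] at h; exact (Option.some_ne_none _ h).elim
    | succ j => exact hinf (j + 1)

end AuxGame

/-- For every non-divergent LTS and all states `s`, `t`, branching
bisimilarity coincides with the relation induced by the limited branching
bisimulation game. -/
theorem branchingBisimilar_iff_lbbEquiv_of_nonDivergent {S : Type u} {A : Type v}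
    (L : LTS S A) (hnd : L.NonDivergent) (s t : S) :
    L.BranchingBisimilar s t ↔ L.lbbEquiv s t := by
  constructor
  · rintro ⟨R, hR, hst⟩
    exact sb_lbb L ⟨R, isSBB_of_branching hR, hst⟩
  · intro h
    refine ⟨L.lbbEquiv, ⟨fun u v huv => lbb_symm L huv, ?_⟩, h⟩
    intro u v a u' huv htr
    obtain ⟨σ, hval, hw⟩ := huv
    exact extract L hnd σ hval htr v v hw (Or.inl rfl)

end GamesBisim
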